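/- Upper bound via reverse Hölder: for γ < 0, the expression (1/(1-γ)) log ∫ q̃(z) L(z)^{1-γ} dμ − (γ/(1-γ)) log ∫ q̃(z)^{1/γ} p(z)^{1−1/γ} dμ is an upper bound on log ∫ p(z) L(z) dμ, assuming all integrals are finite and positive and q̃ is positive on the support of p. -/

import Mathlib

/-!
With `r = 1 - γ > 1` and the conjugate exponent `s = (1 - γ) / (-γ)`, the integrand factors as
`p L = (q L ^ r) ^ (1 / r) * (q ^ (1 / γ) p ^ (1 - 1 / γ)) ^ (1 / s)`, the two bases being
exactly the other two integrands. Hölder's inequality for this factorisation, followed by `log`,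
is the claim.
-/

open MeasureTheory Real

theorem integral_rpow_mul_rpow_le {α : Type*} [MeasurableSpace α] {μ : Measure α}
    {f g : α → ℝ} (hf₀ : 0 ≤ᵐ[μ] f) (hg₀ : 0 ≤ᵐ[μ] g) (hf : Integrable f μ)
    (hg : Integrable g μ) {a b : ℝ} (ha : 0 ≤ a) (hb : 0 ≤ b) (hab : a + b = 1) :
    ∫ x, f x ^ a * g x ^ b ∂μ ≤ (∫ x, f x ∂μ) ^ a * (∫ x, g x ∂μ) ^ b := by
  have hfg₀ : 0 ≤ᵐ[μ] fun x => f x ^ a * g x ^ b := by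
    filter_upwards [hf₀, hg₀] with x hfx hgx
    exact mul_nonneg (rpow_nonneg hfx a) (rpow_nonneg hgx b)
  have hfg : AEStronglyMeasurable (fun x => f x ^ a * g x ^ b) μ :=
    ((hf.aemeasurable.pow_const a).mul (hg.aemeasurable.pow_const b)).aestronglyMeasurable
  have hofReal : ∀ᵐ x ∂μ, ENNReal.ofReal (f x ^ a * g x ^ b) =
      ENNReal.ofReal (f x) ^ a * ENNReal.ofReal (g x) ^ b := by
    filter_upwards [hf₀, hg₀] with x hfx hgx
    rw [ENNReal.ofReal_mul (rpow_nonneg hfx a), ENNReal.ofReal_rpow_of_nonneg hfx ha,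
      ENNReal.ofReal_rpow_of_nonneg hgx hb]
  rw [integral_eq_lintegral_of_nonneg_ae hfg₀ hfg, lintegral_congr_ae hofReal,
    integral_eq_lintegral_of_nonneg_ae hf₀ hf.1, integral_eq_lintegral_of_nonneg_ae hg₀ hg.1,
    ENNReal.toReal_rpow, ENNReal.toReal_rpow, ← ENNReal.toReal_mul]
  refine ENNReal.toReal_mono ?_ (ENNReal.lintegral_mul_norm_pow_le
    hf.aemeasurable.ennreal_ofReal hg.aemeasurable.ennreal_ofReal ha hb hab)
  exact ENNReal.mul_ne_top (ENNReal.rpow_ne_top_of_nonneg ha hf.lintegral_lt_top.ne)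
    (ENNReal.rpow_ne_top_of_nonneg hb hg.lintegral_lt_top.ne)

theorem mul_eq_rpow_mul_rpow_of_neg {x y w γ : ℝ} (hγ : γ < 0) (hx : 0 ≤ x) (hy : 0 ≤ y)
    (hw : 0 < x → 0 < w) :
    x * y =
      (w * y ^ (1 - γ)) ^ (1 / (1 - γ)) * (w ^ (1 / γ) * x ^ (1 - 1 / γ)) ^ (-γ / (1 - γ)) := by
  have hγ₀ : γ ≠ 0 := hγ.ne
  have hr : 1 - γ ≠ 0 := by linarith
  rcases hx.eq_or_lt with rfl | hx
  · have hc : (1 : ℝ) - 1 / γ ≠ 0 := by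
      have : 1 / γ < 0 := one_div_neg.2 hγ
      linarith
    rw [zero_rpow hc, mul_zero, zero_rpow (div_ne_zero (neg_ne_zero.2 hγ₀) hr), mul_zero,
      zero_mul]
  have hw := hw hx
  have hb : 1 / γ * (-γ / (1 - γ)) = -(1 / (1 - γ)) := by field_simp
  have hb' : (1 - 1 / γ) * (-γ / (1 - γ)) = 1 := by field_simp; ring
  rw [mul_rpow hw.le (rpow_nonneg hy _), mul_rpow (rpow_nonneg hw.le _) (rpow_nonneg hx.le _),
    ← rpow_mul hw.le, ← rpow_mul hx.le, ← rpow_mul hy, hb, hb',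
    mul_one_div_cancel hr, rpow_one, rpow_one, rpow_neg hw.le]
  have : w ^ (1 / (1 - γ)) ≠ 0 := (rpow_pos_of_pos hw _).ne'
  field_simp

theorem fractional_upper_bound_neg_general
    {Z : Type*} [MeasurableSpace Z] (μ : Measure Z)
    (p L q : Z → ℝ) (γ : ℝ) (hγ : γ < 0)
    (hp : ∀ z, 0 ≤ p z) (hL : ∀ z, 0 ≤ L z) (hq : ∀ z, 0 ≤ q z)
    (hqpos : ∀ z, 0 < p z → 0 < q z)
    (h1pos : 0 < ∫ z, p z * L z ∂μ)
    (h2 : Integrable (fun z => q z * L z ^ (1 - γ)) μ)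
    (h2pos : 0 < ∫ z, q z * L z ^ (1 - γ) ∂μ)
    (h3 : Integrable (fun z => q z ^ (1/γ) * p z ^ (1 - 1/γ)) μ)
    (h3pos : 0 < ∫ z, q z ^ (1/γ) * p z ^ (1 - 1/γ) ∂μ) :
    Real.log (∫ z, p z * L z ∂μ) ≤
      (1/(1-γ)) * Real.log (∫ z, q z * L z ^ (1 - γ) ∂μ)
      - (γ/(1-γ)) * Real.log (∫ z, q z ^ (1/γ) * p z ^ (1 - 1/γ) ∂μ) := by
  have hr : 0 < 1 - γ := by linarith
  have hab : 1 / (1 - γ) + -γ / (1 - γ) = 1 := by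
    rw [← add_div, ← sub_eq_add_neg, div_self hr.ne']
  have holder : ∫ z, p z * L z ∂μ ≤
      (∫ z, q z * L z ^ (1 - γ) ∂μ) ^ (1 / (1 - γ)) *
        (∫ z, q z ^ (1/γ) * p z ^ (1 - 1/γ) ∂μ) ^ (-γ / (1 - γ)) := by
    rw [integral_congr_ae (.of_forall fun z =>
      mul_eq_rpow_mul_rpow_of_neg hγ (hp z) (hL z) (hqpos z))]
    exact integral_rpow_mul_rpow_le
      (.of_forall fun z => mul_nonneg (hq z) (rpow_nonneg (hL z) _))
      (.of_forall fun z => mul_nonneg (rpow_nonneg (hq z) _) (rpow_nonneg (hp z) _))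
      h2 h3 (by positivity) (div_nonneg (by linarith) hr.le) hab
  calc Real.log (∫ z, p z * L z ∂μ)
      ≤ Real.log ((∫ z, q z * L z ^ (1 - γ) ∂μ) ^ (1 / (1 - γ)) *
          (∫ z, q z ^ (1/γ) * p z ^ (1 - 1/γ) ∂μ) ^ (-γ / (1 - γ))) := log_le_log h1pos holder
    _ = _ := by
      rw [log_mul (rpow_pos_of_pos h2pos _).ne' (rpow_pos_of_pos h3pos _).ne',
        log_rpow h2pos, log_rpow h3pos, neg_div]
      ring

/-- Reverse-Hölder extension: for `γ < 0` the expression is an upper bound. -/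
theorem fractional_upper_bound_neg
    {Z : Type*} [MeasurableSpace Z] (μ : Measure Z)
    (p L q : Z → ℝ) (γ : ℝ) (hγ : γ < 0)
    (hp : ∀ z, 0 ≤ p z) (hL : ∀ z, 0 ≤ L z) (hq : ∀ z, 0 ≤ q z)
    (hpm : Measurable p) (hLm : Measurable L) (hqm : Measurable q)
    (hprob : ∫ z, p z ∂μ = 1)
    (hqpos : ∀ z, 0 < p z → 0 < q z)
    (h1 : Integrable (fun z => p z * L z) μ)
    (h1pos : 0 < ∫ z, p z * L z ∂μ)
    (h2 : Integrable (fun z => q z * L z ^ (1 - γ)) μ)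
    (h2pos : 0 < ∫ z, q z * L z ^ (1 - γ) ∂μ)
    (h3 : Integrable (fun z => q z ^ (1/γ) * p z ^ (1 - 1/γ)) μ)
    (h3pos : 0 < ∫ z, q z ^ (1/γ) * p z ^ (1 - 1/γ) ∂μ) :
    Real.log (∫ z, p z * L z ∂μ) ≤
      (1/(1-γ)) * Real.log (∫ z, q z * L z ^ (1 - γ) ∂μ)
      - (γ/(1-γ)) * Real.log (∫ z, q z ^ (1/γ) * p z ^ (1 - 1/γ) ∂μ) :=
  fractional_upper_bound_neg_general μ p L q γ hγ hp hL hq hqpos h1pos h2 h2pos h3 h3pos
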